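/- If λ ∈ ℂ satisfies |2λ² - nπ| ≥ π/4 for all integers n, then 4·|sin(2λ²)| > e^{2|Im(λ²)|}. -/

import Mathlib

lemma abs_sin_sq_aux (a b : ℝ) :
    ‖Complex.sin ((a : ℂ) + (b : ℂ) * Complex.I)‖ ^ 2
      = Real.sin a ^ 2 + Real.sinh b ^ 2 := by
  rw [Complex.sin_add_mul_I, Complex.sq_norm, ← Complex.ofReal_sin,
    ← Complex.ofReal_cos, ← Complex.ofReal_cosh, ← Complex.ofReal_sinh]
  simp only [Complex.normSq_apply, Complex.add_re, Complex.add_im, Complex.mul_re,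
    Complex.mul_im, Complex.I_re, Complex.I_im, Complex.ofReal_re, Complex.ofReal_im]
  ring_nf
  linear_combination Real.sin a ^ 2 * Real.cosh_sq b + Real.sinh b ^ 2 * Real.sin_sq_add_cos_sq a

set_option maxHeartbeats 1600000 in
/-- If `λ ∈ ℂ` satisfies `|2λ² - nπ| ≥ π/4` for all integers `n`, then
`4·|sin(2λ²)| > e^{2|Im(λ²)|}`. -/
theorem stmt1 (lam : ℂ)
    (h : ∀ n : ℤ, Real.pi / 4 ≤ ‖2 * lam ^ 2 - (n : ℂ) * (Real.pi : ℂ)‖) :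
    Real.exp (2 * |(lam ^ 2).im|) < 4 * ‖Complex.sin (2 * lam ^ 2)‖ := by
  have hπ := Real.pi_pos
  set z : ℂ := 2 * lam ^ 2 with hz
  set n : ℤ := round (z.re / Real.pi) with hn
  set u : ℝ := z.re - n * Real.pi with hu
  set y : ℝ := z.im with hy
  have him : 2 * |(lam ^ 2).im| = |y| := by
    have : y = 2 * (lam ^ 2).im := by simp [hy, hz, Complex.mul_im]
    rw [this, abs_mul]; norm_num
  rw [him]
  -- |u| ≤ π/2
  have hu2 : |u| ≤ Real.pi / 2 := by
    have h1 : |z.re / Real.pi - n| ≤ 1 / 2 := abs_sub_round _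
    have heq : u = (z.re / Real.pi - n) * Real.pi := by
      rw [hu]; field_simp
    rw [heq, abs_mul, abs_of_pos hπ]
    calc |z.re / Real.pi - ↑n| * Real.pi ≤ 1 / 2 * Real.pi :=
          mul_le_mul_of_nonneg_right h1 (le_of_lt hπ)
      _ = Real.pi / 2 := by ring
  -- π²/16 ≤ u² + y²
  have hdist : Real.pi ^ 2 / 16 ≤ u ^ 2 + y ^ 2 := by
    have h2 := h n
    have h3 : (Real.pi / 4) ^ 2 ≤ ‖z - (n : ℂ) * (Real.pi : ℂ)‖ ^ 2 :=
      pow_le_pow_left₀ (by positivity) h2 2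
    rw [Complex.sq_norm, Complex.normSq_apply] at h3
    have hre : (z - (n : ℂ) * (Real.pi : ℂ)).re = u := by simp [hu]
    have him' : (z - (n : ℂ) * (Real.pi : ℂ)).im = y := by simp [hy]
    rw [hre, him'] at h3
    nlinarith [h3]
  -- |sin z| = |sin w| with w = z - nπ
  set w : ℂ := z - (n : ℂ) * (Real.pi : ℂ) with hw
  have habs : ‖Complex.sin z‖ = ‖Complex.sin w‖ := by
    have hzw : z = w + (n : ℂ) * (Real.pi : ℂ) := by ring
    rw [hzw, Complex.sin_add, Complex.sin_int_mul_pi, mul_zero, add_zero, norm_mul]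
    have hc : Complex.cos ((n : ℂ) * (Real.pi : ℂ)) = ((Real.cos (n * Real.pi) : ℝ) : ℂ) := by
      rw [Complex.ofReal_cos]; push_cast; ring_nf
    rw [hc, Complex.norm_real, Real.norm_eq_abs, Real.abs_cos_int_mul_pi, mul_one]
  rw [habs]
  have hwre : w.re = u := by simp [hw, hu]
  have hwim : w.im = y := by simp [hw, hy]
  have hwdecomp : w = (u : ℂ) + (y : ℂ) * Complex.I := by
    rw [← hwre, ← hwim, Complex.re_add_im]
  have hsinw : ‖Complex.sin w‖ ^ 2 = Real.sin u ^ 2 + Real.sinh y ^ 2 := by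
    rw [hwdecomp]; exact abs_sin_sq_aux u y
  clear_value w u y n z
  apply lt_of_pow_lt_pow_left₀ 2 (by positivity)
  have hexp2 : Real.exp |y| ^ 2 = Real.exp (2 * |y|) := by
    rw [← Real.exp_nat_mul]; norm_num
  rw [hexp2, mul_pow, hsinw]
  have goal16 : ∀ A : ℝ, Real.exp (2*|y|) < 16 * A → Real.exp (2*|y|) < 4 ^ 2 * A := by
    intro A hA
    have h16 : (4:ℝ) ^ 2 = 16 := by norm_num
    rw [h16]; exact hA
  apply goal16
  rcases le_or_gt |y| (1/2) with h1 | h1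
  · -- small y
    have hs := Real.mul_abs_le_abs_sin hu2
    have h7 : (2/Real.pi*|u|)^2 ≤ |Real.sin u|^2 := pow_le_pow_left₀ (by positivity) hs 2
    rw [mul_pow, sq_abs, sq_abs] at h7
    have hsinh : y ^ 2 ≤ Real.sinh y ^ 2 := by
      have h4 : |y| ≤ Real.sinh |y| := Real.self_le_sinh_iff.mpr (abs_nonneg y)
      nlinarith [abs_nonneg y, sq_abs y, Real.abs_sinh y, sq_abs (Real.sinh y)]
    have hexp : Real.exp (2 * |y|) ≤ Real.exp 1 := Real.exp_le_exp.mpr (by linarith)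
    have he1 : Real.exp 1 < 2.7182818286 := Real.exp_one_lt_d9
    have hπ3 : Real.pi > 3 := Real.pi_gt_three
    have hp : (0:ℝ) < Real.pi ^ 2 := by positivity
    have hp9 : 9 < Real.pi ^ 2 := by nlinarith
    have h7' : 4 * u ^ 2 ≤ Real.sin u ^ 2 * Real.pi ^ 2 := by
      have h9 := mul_le_mul_of_nonneg_right h7 hp.le
      rw [show (2 / Real.pi) ^ 2 * u ^ 2 * Real.pi ^ 2
          = 4 * u ^ 2 * (Real.pi ^ 2 / Real.pi ^ 2) by ring,
        div_self (ne_of_gt hp), mul_one] at h9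
      exact h9
    have step1 : 4 * Real.pi ^ 2 - 64 * y ^ 2 ≤ 64 * u ^ 2 := by linarith [hdist]
    have step3 : y ^ 2 * Real.pi ^ 2 ≤ Real.sinh y ^ 2 * Real.pi ^ 2 :=
      mul_le_mul_of_nonneg_right hsinh hp.le
    have step4 : 64 * y ^ 2 ≤ 16 * (y ^ 2 * Real.pi ^ 2) := by
      nlinarith [mul_nonneg (sq_nonneg y) (by linarith : (0:ℝ) ≤ Real.pi ^ 2 - 9)]
    have key4 : 4 * Real.pi ^ 2 ≤ 16 * (Real.sin u ^ 2 + Real.sinh y ^ 2) * Real.pi ^ 2 := by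
      linarith [step1, h7', step3, step4]
    have key : 4 ≤ 16 * (Real.sin u ^ 2 + Real.sinh y ^ 2) :=
      le_of_mul_le_mul_right key4 hp
    linarith [key, hexp, he1]
  · -- large y
    have hsinh : Real.sinh y ^ 2 = Real.sinh |y| ^ 2 := by
      rw [← Real.abs_sinh, sq_abs]
    set t : ℝ := Real.exp |y| with ht
    have htpos : 0 < t := Real.exp_pos _
    have ht2 : Real.exp (2 * |y|) = t ^ 2 := hexp2.symm
    have hsinh2 : Real.sinh |y| = (t - 1/t) / 2 := by
      rw [Real.sinh_eq, Real.exp_neg, ht]; ring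
    have htlb : t ^ 2 > 2.71 := by
      rw [← ht2]
      have hle : Real.exp 1 ≤ Real.exp (2 * |y|) := Real.exp_le_exp.mpr (by linarith)
      nlinarith [Real.exp_one_gt_d9]
    have hti : t * (1/t) = 1 := by field_simp
    have big : t ^ 2 < 16 * Real.sinh y ^ 2 := by
      rw [hsinh, hsinh2]
      linarith [hti, htlb, sq_nonneg (1/t), sq_nonneg (t - 1/t)]
    rw [ht2]
    linarith [sq_nonneg (Real.sin u), big]
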